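/- For every positive integer n: Li_2(q^{-n};q) = -∑_{k=1}^n k/(1-q^k), and also Li_2(1;q) = 0 and Li_2(0;q) = ∑_{k=1}^∞ q^k/(1-q^k)^2 = ∑_{n=1}^∞ n q^n/(1-q^n), where 0 < q < 1. -/

import Mathlib

/-!
Writing `Li_j(x;q) = ∑_{k≥1} q^k/(1-q^k)^j (x;q)_k`, the relation
`(1 - x)(qx;q)_k = (x;q)_{k+1}` gives `Li_{j+1}(x;q) - Li_{j+1}(qx;q) = -x/(1-x) Li_j(x;q)`.
At `x = q^{-n}` all sums are finite, since `(q^{-n};q)_k = 0` for `k > n`, and `Li_0(q^{-n};q)`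
telescopes to `q^n - 1`; induction on `n` then gives `Li_1(q^{-n};q) = -n` and the value of
`Li_2(q^{-n};q)`. The identity for `Li_2(0;q)` is the Lambert series expansion: both sides equal
`∑ σ₁(n) q^n`.
-/

noncomputable def qPoch (q x : ℂ) (k : ℕ) : ℂ := ∏ j ∈ Finset.range k, (1 - x * q ^ j)

noncomputable def qDilog (q : ℝ) (x : ℂ) : ℂ :=
  ∑' k : ℕ, ((q : ℂ) ^ (k + 1) / (1 - (q : ℂ) ^ (k + 1)) ^ 2) * qPoch q x (k + 1)

open Finset

theorem one_sub_pow_ne_zero_of_not_isOfFinOrder {R : Type*} [Ring R] {c : R}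
    (hc : ¬IsOfFinOrder c) {m : ℕ} (hm : m ≠ 0) : 1 - c ^ m ≠ 0 :=
  sub_ne_zero.2 fun h ↦ hc (isOfFinOrder_iff_pow_eq_one.2 ⟨m, Nat.pos_of_ne_zero hm, h.symm⟩)

theorem tsum_pnat_coe_mul_pow_mul {𝕜 : Type*} [NormedDivisionRing 𝕜] {r : 𝕜} (hr : ‖r‖ < 1)
    (d : ℕ+) : ∑' c : ℕ+, (c : 𝕜) * r ^ (d * c : ℕ) = r ^ (d : ℕ) / (1 - r ^ (d : ℕ)) ^ 2 := by
  have hrd : ‖r ^ (d : ℕ)‖ < 1 := by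
    rw [norm_pow]
    exact pow_lt_one₀ (norm_nonneg _) hr d.ne_zero
  rw [← tsum_coe_mul_geometric_of_norm_lt_one hrd,
    ← tsum_zero_pnat_eq_tsum_nat (hasSum_coe_mul_geometric_of_norm_lt_one hrd).summable]
  simp [pow_mul]

theorem tsum_pow_div_one_sub_sq_eq_tsum_mul_pow_div_one_sub {𝕜 : Type*}
    [NontriviallyNormedField 𝕜] [CompleteSpace 𝕜] [NormSMulClass ℤ 𝕜] {r : 𝕜} (hr : ‖r‖ < 1) :
    ∑' k : ℕ, r ^ (k + 1) / (1 - r ^ (k + 1)) ^ 2 =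
      ∑' n : ℕ, ((n : 𝕜) + 1) * r ^ (n + 1) / (1 - r ^ (n + 1)) := by
  rw [← tsum_pnat_eq_tsum_succ (f := fun k ↦ r ^ k / (1 - r ^ k) ^ 2)]
  simp_rw [← Nat.cast_succ]
  rw [← tsum_pnat_eq_tsum_succ (f := fun n ↦ (n : 𝕜) * r ^ n / (1 - r ^ n))]
  calc ∑' d : ℕ+, r ^ (d : ℕ) / (1 - r ^ (d : ℕ)) ^ 2
      = ∑' (d : ℕ+) (c : ℕ+), (c : 𝕜) ^ 1 * r ^ (d * c : ℕ) := by
        simp only [pow_one, tsum_pnat_coe_mul_pow_mul hr]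
    _ = ∑' n : ℕ+, (n : 𝕜) ^ 1 * r ^ (n : ℕ) / (1 - r ^ (n : ℕ)) := by
        rw [tsum_prod_pow_eq_tsum_sigma 1 hr, tsum_pow_div_one_sub_eq_tsum_sigma hr 1]
    _ = _ := by simp only [pow_one]

section QPochhammer

variable (c : ℂ)

theorem qPoch_succ (x : ℂ) (k : ℕ) : qPoch c x (k + 1) = qPoch c x k * (1 - x * c ^ k) :=
  prod_range_succ _ _

theorem qPoch_one_succ_eq_zero (k : ℕ) : qPoch c 1 (k + 1) = 0 :=
  prod_eq_zero (mem_range.2 k.succ_pos) (by simp)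

theorem one_sub_mul_qPoch_mul_left (x : ℂ) (k : ℕ) :
    (1 - x) * qPoch c (c * x) k = qPoch c x (k + 1) := by
  induction k with
  | zero => simp [qPoch]
  | succ k ih => rw [qPoch_succ, qPoch_succ c x, ← ih]; ring

theorem qPoch_sub_qPoch_mul_left {x : ℂ} (hx : x ≠ 1) (k : ℕ) :
    qPoch c x k - qPoch c (c * x) k = -x / (1 - x) * (1 - c ^ k) * qPoch c x k := by
  have hx' : 1 - x ≠ 0 := sub_ne_zero.2 hx.symm
  have h : qPoch c (c * x) k = qPoch c x k * (1 - x * c ^ k) / (1 - x) := by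
    rw [eq_div_iff hx', ← qPoch_succ, ← one_sub_mul_qPoch_mul_left]
    ring
  rw [h]
  field_simp
  ring

end QPochhammer

theorem qPoch_inv_pow_eq_zero {c : ℂ} (hc : c ≠ 0) {n k : ℕ} (h : n < k) :
    qPoch c (c ^ n)⁻¹ k = 0 :=
  prod_eq_zero (mem_range.2 h) (by simp [hc])

/-- Partial sums `∑_{k=1}^N` of the `q`-polylogarithm `Li_j(x;c)`; `qDilog` is `Li_2`. -/
noncomputable def qPolylogPartial (j : ℕ) (c x : ℂ) (N : ℕ) : ℂ :=
  ∑ k ∈ range N, c ^ (k + 1) / (1 - c ^ (k + 1)) ^ j * qPoch c x (k + 1)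

theorem qPolylogPartial_succ (j : ℕ) (c x : ℂ) (N : ℕ) :
    qPolylogPartial j c x (N + 1) =
      qPolylogPartial j c x N + c ^ (N + 1) / (1 - c ^ (N + 1)) ^ j * qPoch c x (N + 1) :=
  sum_range_succ _ _

theorem mul_qPolylogPartial_zero (c x : ℂ) (N : ℕ) :
    x * qPolylogPartial 0 c x N = 1 - x - qPoch c x (N + 1) := by
  induction N with
  | zero => simp [qPolylogPartial, qPoch]
  | succ N ih =>
    rw [qPolylogPartial_succ, mul_add, ih, qPoch_succ c x (N + 1)]
    ring

section QPolylogPartial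

variable {c : ℂ}

theorem qPolylogPartial_sub_mul_left (hc : ¬IsOfFinOrder c) {x : ℂ} (hx : x ≠ 1) (j N : ℕ) :
    qPolylogPartial (j + 1) c x N - qPolylogPartial (j + 1) c (c * x) N =
      -x / (1 - x) * qPolylogPartial j c x N := by
  rw [qPolylogPartial, qPolylogPartial, qPolylogPartial, ← sum_sub_distrib, mul_sum]
  refine sum_congr rfl fun k _ ↦ ?_
  have hk := one_sub_pow_ne_zero_of_not_isOfFinOrder hc k.succ_ne_zero
  rw [← mul_sub, qPoch_sub_qPoch_mul_left c hx]
  field_simp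
  ring

theorem qPolylogPartial_inv_pow_of_le (hc : c ≠ 0) (j : ℕ) {n N : ℕ} (h : n ≤ N) :
    qPolylogPartial j c (c ^ n)⁻¹ N = qPolylogPartial j c (c ^ n)⁻¹ n := by
  refine (sum_subset (range_subset_range.2 h) fun k _ hk ↦ ?_).symm
  rw [qPoch_inv_pow_eq_zero hc (by simpa using hk), mul_zero]

theorem qPolylogPartial_zero_inv_pow (hc : c ≠ 0) (n : ℕ) :
    qPolylogPartial 0 c (c ^ n)⁻¹ n = c ^ n - 1 := by
  have h := mul_qPolylogPartial_zero c (c ^ n)⁻¹ n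
  rw [qPoch_inv_pow_eq_zero hc n.lt_succ_self, sub_zero] at h
  have hcn : c ^ n ≠ 0 := pow_ne_zero n hc
  calc qPolylogPartial 0 c (c ^ n)⁻¹ n
        = c ^ n * ((c ^ n)⁻¹ * qPolylogPartial 0 c (c ^ n)⁻¹ n) := by field_simp
    _ = c ^ n - 1 := by rw [h]; field_simp

theorem qPolylogPartial_succ_inv_pow_succ (hc₀ : c ≠ 0) (hc : ¬IsOfFinOrder c) (j n : ℕ) :
    qPolylogPartial (j + 1) c (c ^ (n + 1))⁻¹ (n + 1) =
      qPolylogPartial (j + 1) c (c ^ n)⁻¹ n +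
        qPolylogPartial j c (c ^ (n + 1))⁻¹ (n + 1) / (1 - c ^ (n + 1)) := by
  have hz : 1 - c ^ (n + 1) ≠ 0 := one_sub_pow_ne_zero_of_not_isOfFinOrder hc n.succ_ne_zero
  have hz₀ : c ^ (n + 1) ≠ 0 := pow_ne_zero _ hc₀
  have hx : (c ^ (n + 1))⁻¹ ≠ 1 := inv_ne_one.2 fun h ↦ hz (by rw [h, sub_self])
  have hcx : c * (c ^ (n + 1))⁻¹ = (c ^ n)⁻¹ := by
    rw [pow_succ]
    field_simp
  have hfactor : -(c ^ (n + 1))⁻¹ / (1 - (c ^ (n + 1))⁻¹) = (1 - c ^ (n + 1))⁻¹ := by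
    have : c ^ (n + 1) - 1 ≠ 0 := fun h ↦ hz (by linear_combination -h)
    field_simp
    ring
  have h := qPolylogPartial_sub_mul_left hc hx j (n + 1)
  rw [hcx, qPolylogPartial_inv_pow_of_le hc₀ _ n.le_succ, hfactor] at h
  linear_combination h

theorem qPolylogPartial_one_inv_pow (hc₀ : c ≠ 0) (hc : ¬IsOfFinOrder c) (n : ℕ) :
    qPolylogPartial 1 c (c ^ n)⁻¹ n = -n := by
  induction n with
  | zero => simp [qPolylogPartial]
  | succ n ih =>
    have hz : 1 - c ^ (n + 1) ≠ 0 := one_sub_pow_ne_zero_of_not_isOfFinOrder hc n.succ_ne_zero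
    rw [qPolylogPartial_succ_inv_pow_succ hc₀ hc, ih, qPolylogPartial_zero_inv_pow hc₀]
    field_simp
    push_cast
    ring

theorem qPolylogPartial_two_inv_pow (hc₀ : c ≠ 0) (hc : ¬IsOfFinOrder c) (n : ℕ) :
    qPolylogPartial 2 c (c ^ n)⁻¹ n = -∑ k ∈ Icc 1 n, (k : ℂ) / (1 - c ^ k) := by
  induction n with
  | zero => simp [qPolylogPartial]
  | succ n ih =>
    rw [qPolylogPartial_succ_inv_pow_succ hc₀ hc, ih, qPolylogPartial_one_inv_pow hc₀ hc,
      sum_Icc_succ_top (by omega)]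
    push_cast
    ring

end QPolylogPartial

theorem qDilog_inv_pow {q : ℝ} (hq : q ≠ 0) (n : ℕ) :
    qDilog q ((q : ℂ) ^ n)⁻¹ = qPolylogPartial 2 q ((q : ℂ) ^ n)⁻¹ n :=
  tsum_eq_sum fun k hk ↦ by
    rw [qPoch_inv_pow_eq_zero (Complex.ofReal_ne_zero.2 hq) (by simpa using hk), mul_zero]

theorem qdilog_special_values (q : ℝ) (hq0 : 0 < q) (hq1 : q < 1) :
    qDilog q 1 = 0 ∧
    qDilog q 0 = ∑' k : ℕ, (q : ℂ) ^ (k + 1) / (1 - (q : ℂ) ^ (k + 1)) ^ 2 ∧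
    (∑' k : ℕ, (q : ℂ) ^ (k + 1) / (1 - (q : ℂ) ^ (k + 1)) ^ 2) =
      ∑' n : ℕ, ((n : ℂ) + 1) * (q : ℂ) ^ (n + 1) / (1 - (q : ℂ) ^ (n + 1)) ∧
    ∀ n : ℕ, 1 ≤ n →
      qDilog q ((q : ℂ) ^ (-(n : ℤ))) = -∑ k ∈ Finset.Icc 1 n, (k : ℂ) / (1 - (q : ℂ) ^ k) := by
  have hq : (q : ℂ) ≠ 0 := Complex.ofReal_ne_zero.2 hq0.ne'
  have hnorm : ‖(q : ℂ)‖ < 1 := by rwa [Complex.norm_real, Real.norm_of_nonneg hq0.le]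
  have hfin : ¬IsOfFinOrder (q : ℂ) := fun h ↦ hnorm.ne h.norm_eq_one
  refine ⟨by simp [qDilog, qPoch_one_succ_eq_zero], by simp [qDilog, qPoch],
    tsum_pow_div_one_sub_sq_eq_tsum_mul_pow_div_one_sub hnorm, fun n _ ↦ ?_⟩
  rw [zpow_neg, zpow_natCast, qDilog_inv_pow hq0.ne', qPolylogPartial_two_inv_pow hq hfin]
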